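/- arXiv:2603.29911 — 4 statements merged into one kernel-verified Lean document; each statement's English description precedes it below -/
import Mathlib

section
/- Let μ be a finite positive measure on a measurable space and ℓ a bounded measurable real-valued function. Define V(a) = (∫ (1+aℓ)^((1-a)/a) dμ)^{1/(1-a)} for small a ≠ 0 (so that 1+aℓ > 0 everywhere), and V(0) = ∫ e^ℓ dμ. Then V(a) → V(0) as a → 0. -/
open Real Filter Topology MeasureTheory

lemma abs_log_one_add_le {u : ℝ} (hu : |u| ≤ 1 / 2) : |Real.log (1 + u)| ≤ 2 * |u| := by
  have h1 : -(1/2 : ℝ) ≤ u := by linarith [neg_abs_le u]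
  have h2 : u ≤ 1/2 := le_trans (le_abs_self u) hu
  have hpos : (0:ℝ) < 1 + u := by linarith
  rw [abs_le]
  constructor
  · have : Real.log (1 + u)⁻¹ ≤ (1 + u)⁻¹ - 1 :=
      Real.log_le_sub_one_of_pos (by positivity)
    rw [Real.log_inv] at this
    have hinv : (1 + u)⁻¹ - 1 = -u / (1 + u) := by field_simp; ring
    have habs : -u / (1 + u) ≤ 2 * |u| := by
      rw [div_le_iff₀ hpos]
      have : -u ≤ |u| := neg_le_abs u
      nlinarith [abs_nonneg u, neg_abs_le u, le_abs_self u]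
    nlinarith [this, habs]
  · have : Real.log (1 + u) ≤ (1 + u) - 1 := Real.log_le_sub_one_of_pos hpos
    have := le_abs_self u
    nlinarith [abs_nonneg u]

lemma ptlim (c : ℝ) :
    Tendsto (fun a : ℝ => (1 + a * c) ^ ((1 - a) / a)) (𝓝[≠] (0:ℝ)) (𝓝 (Real.exp c)) := by
  have hlog : Tendsto (fun a : ℝ => Real.log (1 + a * c) / a) (𝓝[≠] (0:ℝ)) (𝓝 c) := by
    have h1 : HasDerivAt (fun a : ℝ => 1 + a * c) c 0 := by
      simpa using ((hasDerivAt_id (0:ℝ)).mul_const c).const_add 1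
    have hd : HasDerivAt (fun a : ℝ => Real.log (1 + a * c)) c 0 := by
      have := (Real.hasDerivAt_log (by norm_num : (1:ℝ) + 0 * c ≠ 0)).comp 0 h1
      simp at this; exact this
    have := hasDerivAt_iff_tendsto_slope.mp hd
    refine this.congr (fun a => ?_)
    simp [slope_def_field, div_eq_inv_mul]
  have hpos : ∀ᶠ a in 𝓝[≠] (0:ℝ), 0 < 1 + a * c := by
    have hc : Tendsto (fun a : ℝ => 1 + a * c) (𝓝 0) (𝓝 1) := by
      have : Continuous (fun a : ℝ => 1 + a * c) := by continuity
      simpa using this.tendsto 0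
    exact eventually_nhdsWithin_of_eventually_nhds
      (hc.eventually (eventually_gt_nhds (by norm_num)))
  have hmain : Tendsto (fun a : ℝ => (1 - a) * (Real.log (1 + a * c) / a))
      (𝓝[≠] (0:ℝ)) (𝓝 c) := by
    have h1 : Tendsto (fun a : ℝ => 1 - a) (𝓝[≠] (0:ℝ)) (𝓝 1) := by
      have hct : Continuous (fun a : ℝ => 1 - a) := by continuity
      have h2 : Tendsto (fun a : ℝ => 1 - a) (𝓝[≠] (0:ℝ)) (𝓝 (1 - 0)) :=
        (hct.tendsto 0).mono_left nhdsWithin_le_nhds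
      simpa using h2
    simpa using h1.mul hlog
  have := (Real.continuous_exp.tendsto c).comp hmain
  refine this.congr' ?_
  filter_upwards [hpos] with a ha
  rw [Real.rpow_def_of_pos ha, Function.comp_apply]
  congr 1
  ring

/-- `V(a) = (∫ (1+aℓ)^((1-a)/a) dμ)^{1/(1-a)} → ∫ e^ℓ dμ` as `a → 0`. -/
theorem stmt7 {Ω : Type*} [MeasurableSpace Ω] (μ : Measure Ω) [IsFiniteMeasure μ]
    (ℓ : Ω → ℝ) (hℓ : Measurable ℓ) (C : ℝ) (hC : ∀ x, |ℓ x| ≤ C) :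
    Tendsto (fun a : ℝ => (∫ x, (1 + a * ℓ x) ^ ((1 - a) / a) ∂μ) ^ (1 / (1 - a)))
      (𝓝[≠] 0) (𝓝 (∫ x, Real.exp (ℓ x) ∂μ)) := by
  set D : ℝ := |C| + 1 with hD
  have hD1 : 1 ≤ D := by have := abs_nonneg C; rw [hD]; linarith
  have hℓD : ∀ x, |ℓ x| ≤ D := fun x => le_trans (hC x) (by
    have := le_abs_self C; linarith)
  -- integral convergence
  have hInt : Tendsto (fun a : ℝ => ∫ x, (1 + a * ℓ x) ^ ((1 - a) / a) ∂μ)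
      (𝓝[≠] (0:ℝ)) (𝓝 (∫ x, Real.exp (ℓ x) ∂μ)) := by
    have hsmall : ∀ᶠ a in 𝓝[≠] (0:ℝ), |a| ≤ 1 / (2 * D) := by
      refine eventually_nhdsWithin_of_eventually_nhds ?_
      have : Tendsto (fun a : ℝ => |a|) (𝓝 0) (𝓝 0) := by
        simpa using continuous_abs.tendsto (0:ℝ)
      have hlt : (0:ℝ) < 1 / (2 * D) := by rw [hD]; positivity
      exact this.eventually (eventually_le_nhds hlt)
    refine tendsto_integral_filter_of_dominated_convergence
      (fun _ => Real.exp (4 * D)) ?_ ?_ (integrable_const _) ?_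
    · filter_upwards [hsmall, self_mem_nhdsWithin] with a ha hane
      have hm : Measurable (fun x => Real.exp (Real.log (1 + a * ℓ x) * ((1 - a) / a))) :=
        (((hℓ.const_mul a).const_add 1).log.mul_const _).exp
      refine hm.aestronglyMeasurable.congr (Eventually.of_forall fun x => ?_)
      have habs : |a * ℓ x| ≤ 1 / 2 := by
        rw [abs_mul]
        calc |a| * |ℓ x| ≤ (1 / (2 * D)) * D :=
              mul_le_mul ha (hℓD x) (abs_nonneg _) (by positivity)
          _ = 1 / 2 := by
              have hD0 : (0:ℝ) < D := by linarith
              field_simp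
      have hpos : (0:ℝ) < 1 + a * ℓ x := by
        have := neg_abs_le (a * ℓ x); linarith
      exact (Real.rpow_def_of_pos hpos _).symm
    · filter_upwards [hsmall, self_mem_nhdsWithin] with a ha hane
      refine Eventually.of_forall (fun x => ?_)
      have hane' : a ≠ 0 := hane
      have habs : |a * ℓ x| ≤ 1 / 2 := by
        rw [abs_mul]
        calc |a| * |ℓ x| ≤ (1 / (2 * D)) * D :=
              mul_le_mul ha (hℓD x) (abs_nonneg _) (by positivity)
          _ = 1 / 2 := by
              have hD0 : (0:ℝ) < D := by linarith
              field_simp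
      have hpos : (0:ℝ) < 1 + a * ℓ x := by
        have := neg_abs_le (a * ℓ x); linarith
      rw [Real.rpow_def_of_pos hpos, Real.norm_eq_abs, Real.abs_exp]
      refine Real.exp_le_exp.mpr ?_
      calc Real.log (1 + a * ℓ x) * ((1 - a) / a)
          ≤ |Real.log (1 + a * ℓ x) * ((1 - a) / a)| := le_abs_self _
        _ = |1 - a| / |a| * |Real.log (1 + a * ℓ x)| := by
            rw [abs_mul, abs_div]; ring
        _ ≤ |1 - a| / |a| * (2 * |a * ℓ x|) := by
            refine mul_le_mul_of_nonneg_left (abs_log_one_add_le habs) (by positivity)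
        _ = |1 - a| * (2 * |ℓ x|) := by
            have hA : |a| ≠ 0 := by simpa using hane'
            rw [abs_mul]
            field_simp
        _ ≤ 2 * (2 * D) := by
            have ha1 : |a| ≤ 1 := le_trans ha (by
              rw [div_le_one (by positivity)]; linarith)
            have h1a : |1 - a| ≤ 2 := by
              have := abs_sub_abs_le_abs_sub (1:ℝ) a
              have := abs_sub (1:ℝ) a
              calc |1 - a| ≤ |(1:ℝ)| + |a| := abs_sub _ _
                _ ≤ 2 := by rw [abs_one]; linarith
            refine mul_le_mul h1a (by nlinarith [hℓD x, abs_nonneg (ℓ x)]) (by positivity) (by norm_num)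
        _ = 4 * D := by ring
    · exact Eventually.of_forall (fun x => ptlim (ℓ x))
  -- exponent convergence
  have hexp : Tendsto (fun a : ℝ => 1 / (1 - a)) (𝓝[≠] (0:ℝ)) (𝓝 1) := by
    have : ContinuousAt (fun a : ℝ => 1 / (1 - a)) 0 := by
      apply ContinuousAt.div continuousAt_const (by fun_prop)
      norm_num
    have h2 : Tendsto (fun a : ℝ => 1 / (1 - a)) (𝓝[≠] (0:ℝ)) (𝓝 (1 / (1 - 0))) :=
      this.tendsto.mono_left nhdsWithin_le_nhds
    simpa using h2
  exact (hInt.rpow hexp (Or.inr one_pos)).congr (fun a => rfl) |>.trans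
    (by rw [Real.rpow_one])
end

section
/- Let μ be a finite positive measure and ℓ a bounded measurable function. With V(a) = (∫ (1+aℓ)^{(1-a)/a} dμ)^{1/(1-a)} and V_0 = ∫ e^ℓ dμ, one has the first-order expansion V(a) = V_0 + a·(V_0 log V_0 + ∫ e^ℓ(-ℓ²/2 - ℓ) dμ) + O(a²) as a → 0; precisely lim_{a→0} (V(a) - V_0)/a = V_0 log V_0 + ∫ e^ℓ(-ℓ²/2 - ℓ) dμ. -/
open Real Filter Topology MeasureTheory

lemma log_bound2 {u : ℝ} (hu : |u| ≤ 1/2) :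
    |Real.log (1 + u) - u + u^2/2| ≤ 2 * |u|^3 := by
  have h1 : |(-u)| < 1 := by rw [abs_neg]; linarith [abs_nonneg u]
  have h := Real.abs_log_sub_add_sum_range_le h1 2
  simp [Finset.sum_range_succ] at h
  have heq : Real.log (1 + u) - u + u^2/2 = -u + u^2/(1+1) + Real.log (1+u) := by ring
  rw [heq]
  refine h.trans ?_
  rw [div_le_iff₀ (by linarith)]
  nlinarith [abs_nonneg u, pow_nonneg (abs_nonneg u) 3]

lemma log_bound1 {u : ℝ} (hu : |u| ≤ 1/2) :
    |Real.log (1 + u) - u| ≤ 2 * u^2 := by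
  have h1 : |(-u)| < 1 := by rw [abs_neg]; linarith [abs_nonneg u]
  have h := Real.abs_log_sub_add_sum_range_le h1 1
  simp [Finset.sum_range_succ] at h
  have heq : Real.log (1 + u) - u = -u + Real.log (1+u) := by ring
  rw [heq]
  refine h.trans ?_
  rw [div_le_iff₀ (by linarith)]
  nlinarith [abs_nonneg u, sq_nonneg u]

-- exp transfer lemma
lemma exp_transfer {δ : ℝ → ℝ} {L : ℝ}
    (h : Tendsto (fun a => δ a / a) (𝓝[≠] (0:ℝ)) (𝓝 L)) :
    Tendsto (fun a => (Real.exp (δ a) - 1) / a) (𝓝[≠] (0:ℝ)) (𝓝 L) := by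
  have ha0 : Tendsto (fun a : ℝ => a) (𝓝[≠] (0:ℝ)) (𝓝 0) :=
    tendsto_id.mono_left nhdsWithin_le_nhds
  have hδ0 : Tendsto δ (𝓝[≠] (0:ℝ)) (𝓝 0) := by
    have h2 := h.mul ha0
    simp only [mul_zero] at h2
    refine h2.congr' ?_
    filter_upwards [self_mem_nhdsWithin] with a ha
    have ha' : a ≠ 0 := ha
    rw [div_mul_cancel₀ _ ha']
  have hrem : Tendsto (fun a => (Real.exp (δ a) - 1 - δ a) / a) (𝓝[≠] (0:ℝ)) (𝓝 0) := by
    refine squeeze_zero_norm' (a := fun b => |δ b| * |δ b / b|) ?_ ?_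
    · filter_upwards [hδ0.eventually (eventually_abs_sub_lt 0 (by norm_num : (0:ℝ) < 1)),
        self_mem_nhdsWithin] with a hδ1 ha
      have ha' : a ≠ 0 := ha
      rw [sub_zero] at hδ1
      have hb := Real.abs_exp_sub_one_sub_id_le hδ1.le
      have hn : ‖(Real.exp (δ a) - 1 - δ a) / a‖ = |Real.exp (δ a) - 1 - δ a| / |a| := by
        rw [Real.norm_eq_abs, abs_div]
      rw [hn]
      calc |Real.exp (δ a) - 1 - δ a| / |a| ≤ (δ a)^2 / |a| := by
            gcongr
        _ = |δ a| * |δ a / a| := by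
            rw [abs_div, ← sq_abs, ← mul_div_assoc, sq]
    · have h3 : Tendsto (fun a => |δ a| * |δ a / a|) (𝓝[≠] (0:ℝ)) (𝓝 (|(0:ℝ)| * |L|)) :=
        (hδ0.abs).mul (h.abs)
      simpa using h3
  have h4 := h.add hrem
  simp only [add_zero] at h4
  refine h4.congr ?_
  intro a
  ring

lemma pointwise_lim (t : ℝ) :
    Tendsto (fun a : ℝ => ((1 + a*t) ^ ((1-a)/a) - Real.exp t)/a) (𝓝[≠] (0:ℝ))
      (𝓝 (Real.exp t * (-t^2/2 - t))) := by
  have ha0 : Tendsto (fun a : ℝ => a) (𝓝[≠] (0:ℝ)) (𝓝 0) :=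
    tendsto_id.mono_left nhdsWithin_le_nhds
  -- s1 : log(1+at)/a → t
  have h0 : HasDerivAt (fun a : ℝ => 1 + a*t) t 0 := by
    simpa using ((hasDerivAt_id (0:ℝ)).mul_const t).const_add 1
  have hf : HasDerivAt (fun a : ℝ => Real.log (1+a*t)) t 0 := by
    have := h0.log (by norm_num)
    simpa using this
  rw [hasDerivAt_iff_tendsto_slope] at hf
  have s1 : Tendsto (fun a : ℝ => Real.log (1+a*t)/a) (𝓝[≠] (0:ℝ)) (𝓝 t) := by
    refine hf.congr fun a => ?_
    simp [slope_def_field]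
  -- s2 : (log(1+at) - at)/a² → -t²/2
  have s2 : Tendsto (fun a : ℝ => (Real.log (1+a*t) - a*t)/a^2) (𝓝[≠] (0:ℝ))
      (𝓝 (-t^2/2)) := by
    rw [← tendsto_sub_nhds_zero_iff]
    refine squeeze_zero_norm' (a := fun b : ℝ => 2 * |t| ^ 3 * |b|) ?_ ?_
    · have hε : (0:ℝ) < 1/(2*(|t|+1)) := by positivity
      filter_upwards [ha0.eventually (eventually_abs_sub_lt 0 hε),
        self_mem_nhdsWithin] with a haε ha
      have ha' : a ≠ 0 := ha
      rw [sub_zero] at haε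
      have hu : |a*t| ≤ 1/2 := by
        rw [abs_mul]
        calc |a| * |t| ≤ (1/(2*(|t|+1))) * |t| := by
              apply mul_le_mul_of_nonneg_right haε.le (abs_nonneg t)
          _ ≤ 1/2 := by
              rw [div_mul_eq_mul_div, div_le_div_iff₀ (by positivity) (by norm_num)]
              nlinarith [abs_nonneg t]
      have hb := log_bound2 hu
      have key : (Real.log (1+a*t) - a*t)/a^2 - (-t^2/2)
          = (Real.log (1+a*t) - a*t + (a*t)^2/2)/a^2 := by
        field_simp
        ring
      rw [Real.norm_eq_abs, key, abs_div, abs_pow, sq_abs]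
      rw [div_le_iff₀ (by positivity)]
      calc |Real.log (1+a*t) - a*t + (a*t)^2/2| ≤ 2 * |a*t| ^ 3 := hb
        _ = 2 * |t| ^ 3 * |a| * a ^ 2 := by
            rw [abs_mul, mul_pow]
            have : |a|^3 = |a| * a ^ 2 := by
              rw [← sq_abs]; ring
            rw [this]; ring
    · have : Tendsto (fun b : ℝ => 2 * |t| ^ 3 * |b|) (𝓝[≠] (0:ℝ)) (𝓝 (2 * |t| ^ 3 * |0|)) :=
        (ha0.abs).const_mul _
      simpa using this
  -- s3
  set δ : ℝ → ℝ := fun a => ((1-a)/a)*Real.log (1+a*t) - t with hδdef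
  have s3 : Tendsto (fun a => δ a / a) (𝓝[≠] (0:ℝ)) (𝓝 (-t^2/2 - t)) := by
    refine (s2.sub s1).congr' ?_
    filter_upwards [self_mem_nhdsWithin] with a ha
    have ha' : a ≠ 0 := ha
    simp only [hδdef]
    field_simp
    ring
  have s4 := exp_transfer s3
  have s5 := s4.const_mul (Real.exp t)
  refine s5.congr' ?_
  have hε : (0:ℝ) < 1/(|t|+1) := by positivity
  filter_upwards [ha0.eventually (eventually_abs_sub_lt 0 hε),
    self_mem_nhdsWithin] with a haε ha
  have ha' : a ≠ 0 := ha
  rw [sub_zero] at haε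
  have hpos : 0 < 1 + a*t := by
    have : |a*t| < 1 := by
      rw [abs_mul]
      calc |a| * |t| ≤ (1/(|t|+1))*|t| := mul_le_mul_of_nonneg_right haε.le (abs_nonneg t)
        _ < 1 := by
            rw [div_mul_eq_mul_div, div_lt_iff₀ (by positivity)]
            nlinarith [abs_nonneg t]
    have := abs_lt.mp this
    linarith [this.1]
  have hr : (1 + a*t) ^ ((1-a)/a) = Real.exp t * Real.exp (δ a) := by
    rw [Real.rpow_def_of_pos hpos, ← Real.exp_add]
    congr 1
    simp only [hδdef]
    ring
  rw [hr]
  ring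

lemma unif_bound (C₀ : ℝ) (hC₀ : 0 ≤ C₀) (t a : ℝ) (ht : |t| ≤ C₀) (ha : a ≠ 0)
    (haε : |a| ≤ min (1/(2*C₀+2)) (1/(2*(3*C₀^2+C₀+1)))) :
    |((1 + a*t) ^ ((1-a)/a) - Real.exp t)/a| ≤ 2*(3*C₀^2+C₀+1)*Real.exp C₀ := by
  set M : ℝ := 3*C₀^2+C₀+1 with hM
  have hMpos : 0 < M := by positivity
  have ha1 : |a| ≤ 1/(2*C₀+2) := le_trans haε (min_le_left _ _)
  have ha2 : |a| ≤ 1/(2*M) := le_trans haε (min_le_right _ _)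
  have hah : |a| ≤ 1/2 := by
    refine ha1.trans ?_
    rw [div_le_div_iff₀ (by positivity) (by norm_num)]
    linarith
  have hu : |a*t| ≤ 1/2 := by
    rw [abs_mul]
    calc |a| * |t| ≤ (1/(2*C₀+2)) * C₀ := by
          apply mul_le_mul ha1 ht (abs_nonneg t) (by positivity)
      _ ≤ 1/2 := by
          rw [div_mul_eq_mul_div, div_le_div_iff₀ (by positivity) (by norm_num)]
          linarith
  have hpos : 0 < 1 + a*t := by
    have h := abs_le.mp hu
    linarith [h.1]
  have hlog1 : |Real.log (1+a*t) - a*t| ≤ 2*(a*t)^2 := log_bound1 hu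
  have hlogb : |Real.log (1+a*t)| ≤ |a*t| + 2*(a*t)^2 := by
    calc |Real.log (1+a*t)| = |(Real.log (1+a*t) - a*t) + a*t| := by ring_nf
      _ ≤ |Real.log (1+a*t) - a*t| + |a*t| := abs_add_le _ _
      _ ≤ |a*t| + 2*(a*t)^2 := by linarith
  set δ : ℝ := ((1-a)/a)*Real.log (1+a*t) - t with hδdef
  have hδeq : δ = ((1-a)*Real.log (1+a*t) - a*t)/a := by
    rw [hδdef]
    field_simp
  have hnum : |(1-a)*Real.log (1+a*t) - a*t| ≤ a^2*M := by
    have h1 : (1-a)*Real.log (1+a*t) - a*t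
        = (Real.log (1+a*t) - a*t) - a*Real.log (1+a*t) := by ring
    rw [h1]
    have h2 : |(Real.log (1+a*t) - a*t) - a*Real.log (1+a*t)|
        ≤ |Real.log (1+a*t) - a*t| + |a| * |Real.log (1+a*t)| := by
      calc _ ≤ |Real.log (1+a*t) - a*t| + |a*Real.log (1+a*t)| := abs_sub _ _
        _ = _ := by rw [abs_mul]
    refine h2.trans ?_
    have hu2 : (a*t)^2 ≤ a^2*C₀^2 := by
      rw [mul_pow]
      have h3 : t^2 ≤ C₀^2 := by nlinarith [abs_le.mp ht, sq_abs t]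
      nlinarith [sq_nonneg a]
    have huabs : |a*t| ≤ |a| *C₀ := by
      rw [abs_mul]
      exact mul_le_mul_of_nonneg_left ht (abs_nonneg a)
    calc |Real.log (1+a*t) - a*t| + |a| * |Real.log (1+a*t)|
        ≤ 2*((a*t)^2) + |a| * (|a*t| + 2*(a*t)^2) := by
          refine add_le_add (by linarith) (mul_le_mul_of_nonneg_left hlogb (abs_nonneg a))
      _ ≤ 2*(a^2*C₀^2) + |a| * (|a| *C₀ + 2*(a^2*C₀^2)) := by
          refine add_le_add (by linarith) ?_
          refine mul_le_mul_of_nonneg_left ?_ (abs_nonneg a)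
          refine add_le_add huabs (by linarith)
      _ ≤ a^2*M := by
          rw [hM]
          nlinarith [sq_abs a, abs_nonneg a,
            mul_le_mul_of_nonneg_right hah (sq_nonneg a), sq_nonneg C₀]
  have hδle : |δ| ≤ |a| *M := by
    rw [hδeq, abs_div]
    rw [div_le_iff₀ (by positivity : (0:ℝ) < |a|)]
    calc |(1-a)*Real.log (1+a*t) - a*t| ≤ a^2*M := hnum
      _ = |a| *M * |a| := by rw [← sq_abs]; ring
  have hδ1 : |δ| ≤ 1 := by
    refine hδle.trans ?_
    calc |a| *M ≤ (1/(2*M))*M := mul_le_mul_of_nonneg_right ha2 hMpos.le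
      _ ≤ 1 := by
          rw [div_mul_eq_mul_div, div_le_one (by positivity)]
          linarith
  have hexp : |Real.exp δ - 1| ≤ 2 * |δ| := Real.abs_exp_sub_one_le hδ1
  have hr : (1 + a*t) ^ ((1-a)/a) = Real.exp t * Real.exp δ := by
    rw [Real.rpow_def_of_pos hpos, ← Real.exp_add]
    congr 1
    rw [hδdef]
    ring
  rw [hr]
  have h3 : Real.exp t * Real.exp δ - Real.exp t = Real.exp t * (Real.exp δ - 1) := by ring
  rw [h3, abs_div, abs_mul, abs_of_pos (Real.exp_pos t)]
  rw [div_le_iff₀ (by positivity : (0:ℝ) < |a|)]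
  have het : Real.exp t ≤ Real.exp C₀ := Real.exp_le_exp.mpr (le_trans (le_abs_self t) ht)
  calc Real.exp t * |Real.exp δ - 1| ≤ Real.exp C₀ * (2*(|a| *M)) := by
        refine mul_le_mul het ?_ (abs_nonneg _) (Real.exp_pos _).le
        refine hexp.trans ?_
        linarith
    _ = 2*M*Real.exp C₀ * |a| := by ring

/-- First-order expansion of `V(a)`:
`lim_{a→0} (V(a) - V₀)/a = V₀ log V₀ + ∫ e^ℓ(-ℓ²/2 - ℓ) dμ` where `V₀ = ∫ e^ℓ dμ`. -/
theorem stmt8 {Ω : Type*} [MeasurableSpace Ω] (μ : Measure Ω) [IsFiniteMeasure μ]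
    (ℓ : Ω → ℝ) (hℓ : Measurable ℓ) (C : ℝ) (hC : ∀ x, |ℓ x| ≤ C)
    (V₀ : ℝ) (hV₀ : V₀ = ∫ x, Real.exp (ℓ x) ∂μ) :
    Tendsto (fun a : ℝ =>
        ((∫ x, (1 + a * ℓ x) ^ ((1 - a) / a) ∂μ) ^ (1 / (1 - a)) - V₀) / a)
      (𝓝[≠] 0)
      (𝓝 (V₀ * Real.log V₀ + ∫ x, Real.exp (ℓ x) * (-(ℓ x) ^ 2 / 2 - ℓ x) ∂μ)) := by
  have ha0 : Tendsto (fun a : ℝ => a) (𝓝[≠] (0:ℝ)) (𝓝 0) :=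
    tendsto_id.mono_left nhdsWithin_le_nhds
  by_cases hμ : μ = 0
  · subst hμ
    simp only [integral_zero_measure] at hV₀ ⊢
    subst hV₀
    have hz : ∀ᶠ a in 𝓝[≠] (0:ℝ), (((0:ℝ) ^ (1/(1-a)) - 0)/a) = 0 := by
      filter_upwards [ha0.eventually (eventually_abs_sub_lt 0 (by norm_num : (0:ℝ) < 1/2))]
        with a haε
      rw [sub_zero] at haε
      have h1a : (1:ℝ) - a ≠ 0 := by
        have := abs_lt.mp haε; intro h; linarith
      rw [Real.zero_rpow (by simpa using h1a)]
      simp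
    have h0 : (0:ℝ) * Real.log 0 + (0:ℝ) = 0 := by simp
    rw [h0]
    exact tendsto_const_nhds.congr' (hz.mono fun a h => h.symm)
  -- nondegenerate case
  set C₀ : ℝ := max C 0 with hC₀def
  have hC₀ : 0 ≤ C₀ := le_max_right _ _
  have hCb : ∀ x, |ℓ x| ≤ C₀ := fun x => (hC x).trans (le_max_left _ _)
  set M : ℝ := 3*C₀^2+C₀+1 with hMdef
  set ε : ℝ := min (1/(2*C₀+2)) (1/(2*M)) with hεdef
  have hεpos : 0 < ε := by
    apply lt_min <;> positivity
  set B : ℝ := 2*M*Real.exp C₀ with hBdef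
  have hev : ∀ᶠ a in 𝓝[≠] (0:ℝ), a ≠ 0 ∧ |a| ≤ ε := by
    filter_upwards [self_mem_nhdsWithin,
      ha0.eventually (eventually_abs_sub_lt 0 hεpos)] with a h1 h2
    rw [sub_zero] at h2
    exact ⟨h1, h2.le⟩
  have hint_exp : Integrable (fun x => Real.exp (ℓ x)) μ := by
    refine Integrable.mono' (integrable_const (Real.exp C₀))
      (Real.measurable_exp.comp hℓ).aestronglyMeasurable (ae_of_all μ fun x => ?_)
    rw [Real.norm_eq_abs, abs_of_pos (Real.exp_pos _)]
    exact Real.exp_le_exp.mpr ((le_abs_self _).trans (hCb x))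
  have hV₀pos : 0 < V₀ := by
    rw [hV₀]
    have h1 : ∫ x, Real.exp (-C₀) ∂μ ≤ ∫ x, Real.exp (ℓ x) ∂μ := by
      refine integral_mono (integrable_const _) hint_exp fun x => ?_
      exact Real.exp_le_exp.mpr (by linarith [abs_le.mp (hCb x) |>.1])
    have h2 : (0:ℝ) < (μ Set.univ).toReal := by
      refine ENNReal.toReal_pos ?_ (measure_ne_top μ _)
      simpa [Measure.measure_univ_eq_zero] using hμ
    calc (0:ℝ) < (μ Set.univ).toReal * Real.exp (-C₀) := by positivity
      _ = ∫ _x, Real.exp (-C₀) ∂μ := by rw [integral_const, smul_eq_mul]; rfl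
      _ ≤ _ := h1
  have hbasepos : ∀ a : ℝ, |a| ≤ ε → ∀ x, 0 < 1 + a * ℓ x := by
    intro a ha x
    have h1 : |a| ≤ 1/(2*C₀+2) := le_trans ha (min_le_left _ _)
    have hu : |a * ℓ x| ≤ 1/2 := by
      rw [abs_mul]
      calc |a| * |ℓ x| ≤ (1/(2*C₀+2)) * C₀ :=
            mul_le_mul h1 (hCb x) (abs_nonneg _) (by positivity)
        _ ≤ 1/2 := by
            rw [div_mul_eq_mul_div, div_le_div_iff₀ (by positivity) (by norm_num)]
            linarith
    linarith [(abs_le.mp hu).1]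
  have hmeas2 : ∀ a : ℝ, |a| ≤ ε → Measurable (fun x => (1 + a*ℓ x) ^ ((1-a)/a)) := by
    intro a ha
    have heq : (fun x => (1 + a*ℓ x) ^ ((1-a)/a))
        = fun x => Real.exp (Real.log (1 + a*ℓ x) * ((1-a)/a)) := by
      funext x; rw [Real.rpow_def_of_pos (hbasepos a ha x)]
    rw [heq]
    exact Real.measurable_exp.comp
      ((Real.measurable_log.comp ((hℓ.const_mul a).const_add 1)).mul_const _)
  have hmeas : ∀ a : ℝ, |a| ≤ ε → AEStronglyMeasurable
      (fun x => ((1 + a*ℓ x) ^ ((1-a)/a) - Real.exp (ℓ x))/a) μ := by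
    intro a ha
    exact (((hmeas2 a ha).sub (Real.measurable_exp.comp hℓ)).div_const a).aestronglyMeasurable
  have hDCT : Tendsto (fun a : ℝ => ∫ x, ((1 + a*ℓ x) ^ ((1-a)/a) - Real.exp (ℓ x))/a ∂μ)
      (𝓝[≠] (0:ℝ)) (𝓝 (∫ x, Real.exp (ℓ x) * (-(ℓ x) ^ 2 / 2 - ℓ x) ∂μ)) := by
    refine tendsto_integral_filter_of_dominated_convergence (fun _ => B)
      ?_ ?_ (integrable_const B) (ae_of_all μ fun x => pointwise_lim (ℓ x))
    · filter_upwards [hev] with a ha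
      exact hmeas a ha.2
    · filter_upwards [hev] with a ha
      refine ae_of_all μ fun x => ?_
      rw [Real.norm_eq_abs]
      exact unif_bound C₀ hC₀ (ℓ x) a (hCb x) ha.1 ha.2
  have hint_fa : ∀ a : ℝ, a ≠ 0 → |a| ≤ ε →
      Integrable (fun x => (1 + a*ℓ x) ^ ((1-a)/a)) μ := by
    intro a ha haε
    refine Integrable.mono' (integrable_const (Real.exp C₀ + B * |a|))
      ((hmeas2 a haε).aestronglyMeasurable)
      (ae_of_all μ fun x => ?_)
    have hb := unif_bound C₀ hC₀ (ℓ x) a (hCb x) ha haε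
    rw [abs_div] at hb
    rw [div_le_iff₀ (by positivity : (0:ℝ) < |a|)] at hb
    rw [Real.norm_eq_abs]
    have h1 : |(1 + a*ℓ x) ^ ((1-a)/a)|
        ≤ |(1 + a*ℓ x) ^ ((1-a)/a) - Real.exp (ℓ x)| + |Real.exp (ℓ x)| := by
      calc |(1 + a*ℓ x) ^ ((1-a)/a)|
          = |((1 + a*ℓ x) ^ ((1-a)/a) - Real.exp (ℓ x)) + Real.exp (ℓ x)| := by ring_nf
        _ ≤ _ := abs_add_le _ _
    refine h1.trans ?_
    have h2 : |Real.exp (ℓ x)| ≤ Real.exp C₀ := by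
      rw [abs_of_pos (Real.exp_pos _)]
      exact Real.exp_le_exp.mpr ((le_abs_self _).trans (hCb x))
    rw [hBdef]
    linarith [hb]
  set F : ℝ → ℝ := fun a => ∫ x, (1 + a*ℓ x) ^ ((1-a)/a) ∂μ with hFdef
  have hF1 : Tendsto (fun a => (F a - V₀)/a) (𝓝[≠] (0:ℝ))
      (𝓝 (∫ x, Real.exp (ℓ x) * (-(ℓ x) ^ 2 / 2 - ℓ x) ∂μ)) := by
    refine hDCT.congr' ?_
    filter_upwards [hev] with a ha
    rw [hV₀, hFdef]
    simp only
    rw [← integral_sub (hint_fa a ha.1 ha.2) hint_exp, ← integral_div]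
  have hF0 : Tendsto F (𝓝[≠] (0:ℝ)) (𝓝 V₀) := by
    have h1 := (hF1.mul ha0).add (tendsto_const_nhds (x := V₀))
    simp only [zero_mul, mul_zero, zero_add] at h1
    refine h1.congr' ?_
    filter_upwards [self_mem_nhdsWithin] with a ha
    have ha' : a ≠ 0 := ha
    field_simp
    ring
  have hFpos : ∀ᶠ a in 𝓝[≠] (0:ℝ), 0 < F a :=
    hF0.eventually (eventually_gt_nhds hV₀pos)
  have h1a : ∀ᶠ a in 𝓝[≠] (0:ℝ), (1:ℝ) - a ≠ 0 := by
    filter_upwards [ha0.eventually (eventually_abs_sub_lt 0 (by norm_num : (0:ℝ) < 1/2))]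
      with a haε
    rw [sub_zero] at haε
    have := abs_lt.mp haε
    intro h; linarith
  have hlogF : Tendsto (fun a => Real.log (F a)) (𝓝[≠] (0:ℝ)) (𝓝 (Real.log V₀)) :=
    ((Real.continuousAt_log hV₀pos.ne').tendsto.comp hF0)
  have hsub : Tendsto (fun a : ℝ => 1 - a) (𝓝[≠] (0:ℝ)) (𝓝 1) := by
    have := (tendsto_const_nhds (x := (1:ℝ))).sub ha0
    simpa using this
  have hgda : Tendsto (fun a => ((a/(1-a)) * Real.log (F a)) / a) (𝓝[≠] (0:ℝ))
      (𝓝 (Real.log V₀)) := by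
    have h2 := hlogF.div hsub one_ne_zero
    simp only [div_one] at h2
    refine h2.congr' ?_
    filter_upwards [self_mem_nhdsWithin, h1a] with a ha ha1
    have ha' : a ≠ 0 := ha
    simp only [Pi.div_apply]
    field_simp
  have hexp2 := exp_transfer hgda
  have hpart2 : Tendsto (fun a => (F a ^ (1/(1-a)) - F a)/a) (𝓝[≠] (0:ℝ))
      (𝓝 (V₀ * Real.log V₀)) := by
    have h3 := hF0.mul hexp2
    refine h3.congr' ?_
    filter_upwards [self_mem_nhdsWithin, h1a, hFpos] with a ha ha1 haF
    have ha' : a ≠ 0 := ha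
    have hr : F a ^ (1/(1-a)) = F a * Real.exp ((a/(1-a)) * Real.log (F a)) := by
      rw [Real.rpow_def_of_pos haF]
      nth_rewrite 2 [← Real.exp_log haF]
      rw [← Real.exp_add]
      congr 1
      field_simp
      ring
    rw [hr]
    field_simp
  have hsum := hpart2.add hF1
  refine hsum.congr fun a => ?_
  rw [hFdef]
  simp only
  ring
end

section
/- Let μ be a finite positive measure and ℓ a bounded measurable function. Then lim_{a→0} (1/a) ∫ ((1+aℓ)^{(1-a)/a} - (1+aℓ)^{(1-2a)/a}) dμ = ∫ ℓ e^ℓ dμ. -/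
open Real Filter Topology MeasureTheory

lemma aux_abs_log_le (u : ℝ) (h : |u| ≤ 1/2) : |Real.log (1+u)| ≤ 2 * |u| := by
  obtain ⟨h1, h2⟩ := abs_le.mp h
  have hu1 : (0:ℝ) < 1 + u := by linarith
  rcases le_or_gt 0 u with hu | hu
  · rw [abs_of_nonneg (Real.log_nonneg (by linarith)), abs_of_nonneg hu]
    have := Real.log_le_sub_one_of_pos hu1
    linarith
  · rw [abs_of_nonpos (Real.log_nonpos (by linarith) (by linarith)), abs_of_neg hu]
    have h3 := Real.log_le_sub_one_of_pos (show (0:ℝ) < (1+u)⁻¹ by positivity)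
    rw [Real.log_inv] at h3
    have h4 : (1+u)⁻¹ - 1 = (-u) / (1+u) := by field_simp; ring
    have h5 : (-u) / (1+u) ≤ (-u) / (1/2) :=
      div_le_div_of_nonneg_left (by linarith) (by norm_num) (by linarith)
    rw [h4] at h3
    have : (-u) / (1/2) = 2 * (-u) := by ring
    linarith [this ▸ h5]

lemma aux_tendsto_rpow (t : ℝ) :
    Tendsto (fun a : ℝ => (1 + a*t) ^ ((1-2*a)/a)) (𝓝[≠] 0) (𝓝 (Real.exp t)) := by
  have hpos : ∀ᶠ a : ℝ in 𝓝[≠] 0, 0 < 1 + a*t := by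
    have : Tendsto (fun a : ℝ => 1 + a*t) (𝓝[≠] 0) (𝓝 1) := by
      have : Tendsto (fun a : ℝ => 1 + a*t) (𝓝 0) (𝓝 (1 + 0*t)) :=
        (continuous_const.add (continuous_id.mul continuous_const)).continuousAt
      simpa using this.mono_left nhdsWithin_le_nhds
    exact this.eventually (eventually_gt_nhds one_pos)
  have hderiv : HasDerivAt (fun a : ℝ => Real.log (1 + a*t)) t 0 := by
    have h1 : HasDerivAt (fun a : ℝ => 1 + a*t) t 0 := by
      simpa using ((hasDerivAt_id (0:ℝ)).mul_const t).const_add 1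
    have := h1.log (by norm_num)
    simpa using this
  have hslope : Tendsto (fun a : ℝ => Real.log (1 + a*t) / a) (𝓝[≠] 0) (𝓝 t) := by
    have := hasDerivAt_iff_tendsto_slope.mp hderiv
    simpa [slope_fun_def, Real.log_one, div_eq_inv_mul] using this
  have hlog0 : Tendsto (fun a : ℝ => Real.log (1 + a*t)) (𝓝[≠] 0) (𝓝 0) := by
    have : Tendsto (fun a : ℝ => Real.log (1 + a*t)) (𝓝 0) (𝓝 (Real.log (1+0*t))) := by
      apply (Real.continuousAt_log (by norm_num)).comp
      exact (continuous_const.add (continuous_id.mul continuous_const)).continuousAt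
    simpa using this.mono_left nhdsWithin_le_nhds
  have hexp : Tendsto (fun a : ℝ => ((1-2*a)/a) * Real.log (1 + a*t)) (𝓝[≠] 0) (𝓝 t) := by
    have key : ∀ a : ℝ, a ≠ 0 → ((1-2*a)/a) * Real.log (1 + a*t)
        = Real.log (1 + a*t) / a - 2 * Real.log (1 + a*t) := by
      intro a ha; field_simp
    have h2 : Tendsto (fun a : ℝ => Real.log (1 + a*t) / a - 2 * Real.log (1 + a*t))
        (𝓝[≠] 0) (𝓝 (t - 2 * 0)) := hslope.sub (hlog0.const_mul 2)
    have h3 := Tendsto.congr' (by filter_upwards [self_mem_nhdsWithin] with a ha using (key a ha).symm) h2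
    simpa using h3
  have := (Real.continuous_exp.continuousAt.tendsto.comp hexp)
  apply Tendsto.congr' _ this
  filter_upwards [hpos] with a ha
  rw [Function.comp_apply, Real.rpow_def_of_pos ha, mul_comm]

/-- `lim_{a→0} (1/a) ∫ ((1+aℓ)^{(1-a)/a} - (1+aℓ)^{(1-2a)/a}) dμ = ∫ ℓ e^ℓ dμ`. -/
theorem stmt10 {Ω : Type*} [MeasurableSpace Ω] (μ : Measure Ω) [IsFiniteMeasure μ]
    (ℓ : Ω → ℝ) (hℓ : Measurable ℓ) (C : ℝ) (hC : ∀ x, |ℓ x| ≤ C) :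
    Tendsto (fun a : ℝ => (1 / a) *
        ∫ x, ((1 + a * ℓ x) ^ ((1 - a) / a) - (1 + a * ℓ x) ^ ((1 - 2 * a) / a)) ∂μ)
      (𝓝[≠] 0) (𝓝 (∫ x, ℓ x * Real.exp (ℓ x) ∂μ)) := by
  set D : ℝ := max C 0 with hDdef
  have hD0 : 0 ≤ D := le_max_right _ _
  have hℓD : ∀ x, |ℓ x| ≤ D := fun x => (hC x).trans (le_max_left _ _)
  set δ : ℝ := min (1/2) (1/(2*(D+1))) with hδdef
  have hδpos : 0 < δ := lt_min (by norm_num) (by positivity)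
  have hsmall : ∀ᶠ a : ℝ in 𝓝[≠] 0, |a| < δ ∧ a ≠ 0 := by
    have h1 : ∀ᶠ a : ℝ in 𝓝[≠] 0, |a| < δ := by
      have : ∀ᶠ a : ℝ in 𝓝 0, |a| < δ := by
        have := eventually_abs_sub_lt (0:ℝ) hδpos
        simpa using this
      exact this.filter_mono nhdsWithin_le_nhds
    exact h1.and self_mem_nhdsWithin
  have hbase : ∀ a : ℝ, |a| < δ → ∀ x, 1/2 ≤ 1 + a * ℓ x := by
    intro a ha x
    have h1 : |a * ℓ x| ≤ |a| * D := by
      rw [abs_mul]; exact mul_le_mul_of_nonneg_left (hℓD x) (abs_nonneg a)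
    have h2 : |a| ≤ 1/(2*(D+1)) := le_of_lt (ha.trans_le (min_le_right _ _))
    have h3 : |a| * D ≤ (1/(2*(D+1))) * D := mul_le_mul_of_nonneg_right h2 hD0
    have h4 : (1/(2*(D+1))) * D ≤ 1/2 := by
      rw [div_mul_eq_mul_div, div_le_div_iff₀ (by positivity) (by norm_num)]
      nlinarith
    have := abs_le.mp (h1.trans (h3.trans h4))
    linarith [this.1]
  have main : Tendsto (fun a : ℝ => ∫ x, ℓ x * (1 + a * ℓ x) ^ ((1-2*a)/a) ∂μ) (𝓝[≠] 0)
      (𝓝 (∫ x, ℓ x * Real.exp (ℓ x) ∂μ)) := by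
    apply tendsto_integral_filter_of_dominated_convergence (fun _ => D * Real.exp (4*D))
    · refine Eventually.of_forall fun a => ?_
      exact (hℓ.mul ((measurable_const.add (measurable_const.mul hℓ)).pow
        measurable_const)).aestronglyMeasurable
    · filter_upwards [hsmall] with a ha
      obtain ⟨haδ, hane⟩ := ha
      refine ae_of_all _ fun x => ?_
      have hb : 0 < 1 + a * ℓ x := lt_of_lt_of_le (by norm_num) (hbase a haδ x)
      have habs : |a * ℓ x| ≤ |a| * D := by
        rw [abs_mul]; exact mul_le_mul_of_nonneg_left (hℓD x) (abs_nonneg a)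
      have haD : |a| * D ≤ δ * D := mul_le_mul_of_nonneg_right haδ.le hD0
      have hahalf : |a| ≤ 1/2 := le_of_lt (haδ.trans_le (min_le_left _ _))
      have hu : |a * ℓ x| ≤ 1/2 := by
        refine habs.trans ?_
        calc |a| * D ≤ (1/(2*(D+1))) * D :=
              mul_le_mul_of_nonneg_right (le_of_lt (haδ.trans_le (min_le_right _ _))) hD0
          _ ≤ 1/2 := by
              rw [div_mul_eq_mul_div, div_le_div_iff₀ (by positivity) (by norm_num)]; nlinarith
      have hlogb : |Real.log (1 + a * ℓ x)| ≤ 2 * (|a| * D) := by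
        have := aux_abs_log_le (a * ℓ x) hu
        exact this.trans (by nlinarith [abs_nonneg (a * ℓ x)])
      have hexp : |((1-2*a)/a) * Real.log (1 + a * ℓ x)| ≤ 4 * D := by
        rw [abs_mul, abs_div]
        have hane' : 0 < |a| := abs_pos.mpr hane
        have h12 : |1 - 2*a| ≤ 2 := by
          calc |1 - 2*a| ≤ |(1:ℝ)| + |2*a| := abs_sub _ _
            _ = 1 + 2*|a| := by rw [abs_one, abs_mul]; norm_num
            _ ≤ 2 := by linarith
        calc |1-2*a| / |a| * |Real.log (1 + a * ℓ x)|
            ≤ |1-2*a| / |a| * (2 * (|a| * D)) := by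
              exact mul_le_mul_of_nonneg_left hlogb (by positivity)
          _ = |1-2*a| * (2 * D) := by field_simp
          _ ≤ 2 * (2 * D) := mul_le_mul_of_nonneg_right h12 (by positivity)
          _ = 4 * D := by ring
      have hrpow : (1 + a * ℓ x) ^ ((1-2*a)/a) ≤ Real.exp (4*D) := by
        rw [Real.rpow_def_of_pos hb, mul_comm]
        exact Real.exp_le_exp.mpr ((le_abs_self _).trans hexp)
      rw [Real.norm_eq_abs, abs_mul, abs_of_nonneg (Real.rpow_nonneg hb.le _)]
      exact mul_le_mul (hℓD x) hrpow (Real.rpow_nonneg hb.le _) hD0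
    · exact integrable_const _
    · exact ae_of_all _ fun x => (aux_tendsto_rpow (ℓ x)).const_mul (ℓ x)
  apply main.congr'
  filter_upwards [hsmall] with a ha
  obtain ⟨haδ, hane⟩ := ha
  rw [← MeasureTheory.integral_const_mul]
  refine integral_congr_ae (ae_of_all _ fun x => ?_)
  have hb : 0 < 1 + a * ℓ x := lt_of_lt_of_le (by norm_num) (hbase a haδ x)
  have he : (1 - a)/a = (1 - 2*a)/a + 1 := by field_simp; ring
  simp only [he, Real.rpow_add hb, Real.rpow_one]
  field_simp
  ring
end

section
/- Let μ be a finite measure and ℓ bounded measurable, and let F_k(a,t) = (1+at)^{(1-ka)/a}. Then lim_{a→0} (1/a)[∫F_0(a,ℓ)dμ · ∫F_2(a,ℓ)dμ − (∫F_1(a,ℓ)dμ)²] = 0. -/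
open Real Filter Topology MeasureTheory


set_option maxHeartbeats 1000000 in
lemma stmt18_pointwise (C k : ℝ) (hC : 0 ≤ C) (hk0 : 0 ≤ k) (hk2 : k ≤ 2)
    (a : ℝ) (ha : a ≠ 0) (haδ : |a| ≤ 1/(8*(C+1)^3)) (t : ℝ) (ht : |t| ≤ C) :
    |(1 + a*t) ^ ((1 - k*a)/a) - (rexp t + a * (rexp t * (-t^2/2 - k*t)))|
      ≤ (rexp C * (21*(C+1)^4)) * a^2 := by
  have hD : (1:ℝ) ≤ C + 1 := by linarith
  have hC2 : (0:ℝ) ≤ C^2 := sq_nonneg C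
  have hC3 : (0:ℝ) ≤ C^3 := by positivity
  have hD3 : (1:ℝ) ≤ (C+1)^3 := by nlinarith
  have h8pos : (0:ℝ) < 8*(C+1)^3 := by nlinarith
  have key8 : |a| * (8*(C+1)^3) ≤ 1 := (le_div_iff₀ h8pos).mp haδ
  have ha0 : 0 < |a| := abs_pos.mpr ha
  have htabs := abs_nonneg t
  have haabs := abs_nonneg a
  have haC3 : 0 ≤ |a| * C^3 := mul_nonneg haabs hC3
  have haC2 : 0 ≤ |a| * C^2 := mul_nonneg haabs hC2
  have haC1 : 0 ≤ |a| * C := mul_nonneg haabs hC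
  have ha8 : |a| ≤ 1/8 := by nlinarith
  have haC : |a| * C ≤ 1/8 := by nlinarith
  have hat : |a*t| ≤ 1/2 := by
    rw [abs_mul]
    nlinarith [mul_le_mul_of_nonneg_left ht haabs]
  have h1 : 0 < 1 + a*t := by
    have := abs_le.mp hat; linarith
  have hlt : |(-(a*t))| < 1 := by rw [abs_neg]; linarith [hat]
  have hlog := Real.abs_log_sub_add_sum_range_le hlt 2
  simp only [Finset.sum_range_succ, Finset.sum_range_zero] at hlog
  rw [show (1:ℝ) - -(a*t) = 1 + a*t by ring, abs_neg] at hlog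
  set L := Real.log (1 + a*t) with hLdef
  set r := L - a*t + (a*t)^2/2 with hrdef
  have hlog2 : |r| ≤ |a*t|^3/(1 - |a*t|) := by
    rw [hrdef]
    convert hlog using 2
    push_cast
    ring
  have hr : |r| ≤ 2 * (|a| * C)^3 := by
    have h1' : (1:ℝ)/2 ≤ 1 - |a*t| := by linarith [hat]
    have hb : |a*t|^3 / (1 - |a*t|) ≤ 2 * |a*t|^3 := by
      rw [div_le_iff₀ (by linarith)]
      nlinarith [pow_nonneg (abs_nonneg (a*t)) 3]
    have hc : |a*t|^3 ≤ (|a| * C)^3 := by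
      apply pow_le_pow_left₀ (abs_nonneg (a*t))
      rw [abs_mul]
      exact mul_le_mul_of_nonneg_left ht haabs
    linarith [hlog2]
  clear hlog hlog2 hlt
  have hrpow : (1 + a*t) ^ ((1 - k*a)/a)
      = rexp (t + (a*(-t^2/2 - k*t) + (k*a^2*t^2/2 + (1-k*a)*r/a))) := by
    rw [rpow_def_of_pos h1]
    congr 1
    have hLr : L = a*t - (a*t)^2/2 + r := by rw [hrdef]; ring
    rw [show Real.log (1 + a*t) = L from rfl, hLr]
    field_simp
    ring
  -- bounds
  have ht2 : t^2 ≤ C^2 := by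
    have := pow_le_pow_left₀ (abs_nonneg t) ht 2
    rwa [sq_abs] at this
  have hra : |r| ≤ (2*C^3*a^2) * |a| := by
    have he : (|a| * C)^3 = C^3 * a^2 * |a| := by
      rw [mul_pow, show |a|^3 = a^2 * |a| by rw [pow_succ, sq_abs]]
      ring
    rw [he] at hr
    linarith
  have h1k : |1 - k*a| ≤ 2 := by
    have hka1 : |k*a| ≤ 1 := by
      rw [abs_mul, abs_of_nonneg hk0]
      have h2 : k * |a| ≤ 2 * |a| := mul_le_mul_of_nonneg_right hk2 haabs
      linarith
    calc |1 - k*a| ≤ |(1:ℝ)| + |k*a| := abs_sub 1 (k*a)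
      _ ≤ 2 := by rw [abs_one]; linarith
  have hρ : |k*a^2*t^2/2 + (1-k*a)*r/a| ≤ 5*(C+1)^3*a^2 := by
    have e1 : |k*a^2*t^2/2| ≤ C^2 * a^2 := by
      rw [abs_of_nonneg (by positivity)]
      nlinarith [mul_le_mul_of_nonneg_left ht2 (sq_nonneg a),
        mul_nonneg (sq_nonneg a) (sq_nonneg C)]
    have e2 : |(1-k*a)*r/a| ≤ 4*C^3*a^2 := by
      rw [abs_div, abs_mul, div_le_iff₀ ha0]
      nlinarith [abs_nonneg r, abs_nonneg (1-k*a), hra, h1k,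
        mul_le_mul h1k hra (abs_nonneg r) (by norm_num : (0:ℝ) ≤ 2)]
    calc |k*a^2*t^2/2 + (1-k*a)*r/a| ≤ |k*a^2*t^2/2| + |(1-k*a)*r/a| := abs_add_le _ _
      _ ≤ C^2*a^2 + 4*C^3*a^2 := by linarith
      _ ≤ 5*(C+1)^3*a^2 := by
          nlinarith [sq_nonneg a, mul_nonneg (sq_nonneg a) hC3,
            mul_nonneg (sq_nonneg a) hC2, mul_nonneg (sq_nonneg a) hC]
  set ρ := k*a^2*t^2/2 + (1-k*a)*r/a with hρdef
  set v := a*(-t^2/2 - k*t) + ρ with hvdef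
  have hvb : |v| ≤ 4*(C+1)^2* |a| := by
    have e1 : |a*(-t^2/2 - k*t)| ≤ |a| * (C^2/2 + 2*C) := by
      rw [abs_mul]
      apply mul_le_mul_of_nonneg_left _ haabs
      have h5 : |(-t^2/2 - k*t)| ≤ t^2/2 + k*|t| := by
        calc |(-t^2/2 - k*t)| ≤ |(-t^2/2)| + |k*t| := abs_sub _ _
          _ = t^2/2 + k*|t| := by
              rw [abs_mul, abs_of_nonneg hk0,
                abs_of_nonpos (by nlinarith [sq_nonneg t] : -t^2/2 ≤ 0)]
              ring
      nlinarith [abs_le.mp ht, sq_abs t, mul_le_mul_of_nonneg_left ht hk0]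
    have e2 : 5*(C+1)^3*a^2 ≤ (5/8)* |a| := by
      nlinarith [sq_abs a, key8, haabs, mul_nonneg haabs haC3,
        mul_nonneg haabs haC2, mul_nonneg haabs haC1]
    calc |v| ≤ |a*(-t^2/2 - k*t)| + |ρ| := abs_add_le _ _
      _ ≤ |a| *(C^2/2 + 2*C) + 5*(C+1)^3*a^2 := by linarith [hρ]
      _ ≤ 4*(C+1)^2* |a| := by nlinarith [haC3, haC2, haC1, haabs]
  have hv1 : |v| ≤ 1 := by
    have hpw : (C+1)^2 ≤ (C+1)^3 := pow_le_pow_right₀ hD (by norm_num)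
    have h2 := mul_le_mul_of_nonneg_right hpw haabs
    have haD3 : |a| * (C+1)^3 ≤ 1/8 := by linarith
    linarith [hvb]
  have hexp := Real.abs_exp_sub_one_sub_id_le hv1
  have het : rexp t ≤ rexp C := exp_le_exp.mpr (abs_le.mp ht).2
  have hetpos := exp_pos t
  have hFeq : (1 + a*t)^((1-k*a)/a) = rexp t * rexp v := by
    rw [hrpow, Real.exp_add]
  have hsplit : rexp t * rexp v - (rexp t + a*(rexp t*(-t^2/2 - k*t)))
      = rexp t * ((rexp v - 1 - v) + ρ) := by
    rw [hvdef]; ring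
  have hv2 : v^2 ≤ 16*(C+1)^4*a^2 := by
    have h := mul_self_le_mul_self (abs_nonneg v) hvb
    calc v^2 = |v| * |v| := by rw [abs_mul_abs_self v]; exact pow_two v
      _ ≤ (4*(C+1)^2* |a|) * (4*(C+1)^2* |a|) := h
      _ = 16*(C+1)^4*a^2 := by
          rw [show a^2 = |a| * |a| from by rw [abs_mul_abs_self a]; exact pow_two a]; ring
  calc |(1 + a*t)^((1-k*a)/a) - (rexp t + a*(rexp t*(-t^2/2 - k*t)))|
      = rexp t * |(rexp v - 1 - v) + ρ| := by
        rw [hFeq, hsplit, abs_mul, abs_of_pos hetpos]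
    _ ≤ rexp t * (v^2 + |ρ|) := by
        apply mul_le_mul_of_nonneg_left _ hetpos.le
        calc |(rexp v - 1 - v) + ρ| ≤ |rexp v - 1 - v| + |ρ| := abs_add_le _ _
          _ ≤ v^2 + |ρ| := by linarith
    _ ≤ rexp C * (16*(C+1)^4*a^2 + 5*(C+1)^3*a^2) := by
        apply mul_le_mul het _ (by positivity) (exp_pos C).le
        linarith [hρ, hv2]
    _ ≤ (rexp C * (21*(C+1)^4)) * a^2 := by
        have h34 : (C+1)^3 ≤ (C+1)^4 := pow_le_pow_right₀ hD (by norm_num)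
        have hin : 16*(C+1)^4*a^2 + 5*(C+1)^3*a^2 ≤ 21*(C+1)^4*a^2 := by
          have := mul_le_mul_of_nonneg_right h34 (sq_nonneg a)
          linarith
        calc rexp C * (16*(C+1)^4*a^2 + 5*(C+1)^3*a^2)
            ≤ rexp C * (21*(C+1)^4*a^2) := by
              exact mul_le_mul_of_nonneg_left hin (exp_pos C).le
          _ = (rexp C * (21*(C+1)^4)) * a^2 := by ring

open MeasureTheory

lemma stmt18_integrable_exp {Ω : Type*} [MeasurableSpace Ω] (μ : Measure Ω) [IsFiniteMeasure μ]
    (ℓ : Ω → ℝ) (hℓ : Measurable ℓ) (C : ℝ) (hC : ∀ x, |ℓ x| ≤ C) :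
    Integrable (fun x => rexp (ℓ x)) μ := by
  apply (integrable_const (rexp C)).mono' (by fun_prop : Measurable fun x => rexp (ℓ x)).aestronglyMeasurable
  filter_upwards with x
  rw [norm_eq_abs, abs_of_pos (exp_pos _)]
  exact exp_le_exp.mpr (abs_le.mp (hC x)).2

lemma stmt18_integrable_g {Ω : Type*} [MeasurableSpace Ω] (μ : Measure Ω) [IsFiniteMeasure μ]
    (ℓ : Ω → ℝ) (hℓ : Measurable ℓ) (C : ℝ) (hC0 : 0 ≤ C) (hC : ∀ x, |ℓ x| ≤ C)
    (k : ℝ) (hk0 : 0 ≤ k) (hk2 : k ≤ 2) :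
    Integrable (fun x => rexp (ℓ x) * (-(ℓ x)^2/2 - k * ℓ x)) μ := by
  apply (integrable_const (rexp C * (C^2/2 + 2*C))).mono'
  · exact (by fun_prop : Measurable fun x => rexp (ℓ x) * (-(ℓ x)^2/2 - k * ℓ x)).aestronglyMeasurable
  · filter_upwards with x
    rw [norm_eq_abs, abs_mul, abs_of_pos (exp_pos _)]
    have h1 : rexp (ℓ x) ≤ rexp C := exp_le_exp.mpr (abs_le.mp (hC x)).2
    have h2 : |(-(ℓ x)^2/2 - k * ℓ x)| ≤ C^2/2 + 2*C := by
      have ht := hC x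
      calc |(-(ℓ x)^2/2 - k * ℓ x)| ≤ |(-(ℓ x)^2/2)| + |k * ℓ x| := abs_sub _ _
        _ = (ℓ x)^2/2 + k * |ℓ x| := by
            rw [abs_mul, abs_of_nonneg hk0,
              abs_of_nonpos (by nlinarith [sq_nonneg (ℓ x)] : -(ℓ x)^2/2 ≤ 0)]
            ring
        _ ≤ C^2/2 + 2*C := by
            nlinarith [abs_nonneg (ℓ x), mul_le_mul_of_nonneg_left ht hk0,
              pow_le_pow_left₀ (abs_nonneg (ℓ x)) ht 2, sq_abs (ℓ x)]
    exact mul_le_mul h1 h2 (abs_nonneg _) (exp_pos C).le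

lemma stmt18_integral {Ω : Type*} [MeasurableSpace Ω] (μ : Measure Ω) [IsFiniteMeasure μ]
    (ℓ : Ω → ℝ) (hℓ : Measurable ℓ) (C : ℝ) (hC0 : 0 ≤ C) (hC : ∀ x, |ℓ x| ≤ C)
    (k : ℝ) (hk0 : 0 ≤ k) (hk2 : k ≤ 2)
    (a : ℝ) (ha : a ≠ 0) (haδ : |a| ≤ 1/(8*(C+1)^3)) :
    |(∫ x, (1 + a * ℓ x) ^ ((1 - k*a)/a) ∂μ)
      - ((∫ x, rexp (ℓ x) ∂μ) + a * ∫ x, rexp (ℓ x) * (-(ℓ x)^2/2 - k * ℓ x) ∂μ)|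
      ≤ (rexp C * (21*(C+1)^4) * (μ Set.univ).toReal) * a^2 := by
  have hpt : ∀ x, |(1 + a * ℓ x) ^ ((1 - k*a)/a)
      - (rexp (ℓ x) + a * (rexp (ℓ x) * (-(ℓ x)^2/2 - k * ℓ x)))|
      ≤ (rexp C * (21*(C+1)^4)) * a^2 :=
    fun x => stmt18_pointwise C k hC0 hk0 hk2 a ha haδ (ℓ x) (hC x)
  have hintexp := stmt18_integrable_exp μ ℓ hℓ C hC
  have hintg := stmt18_integrable_g μ ℓ hℓ C hC0 hC k hk0 hk2
  have hintG : Integrable (fun x => rexp (ℓ x) + a * (rexp (ℓ x) * (-(ℓ x)^2/2 - k * ℓ x))) μ :=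
    hintexp.add (hintg.const_mul a)
  have hintF : Integrable (fun x => (1 + a * ℓ x) ^ ((1 - k*a)/a)) μ := by
    apply (integrable_const (rexp C * (1 + |a| * (C^2/2 + 2*C)) + (rexp C * (21*(C+1)^4)) * a^2)).mono'
      (by fun_prop : Measurable fun x => (1 + a * ℓ x) ^ ((1 - k*a)/a)).aestronglyMeasurable
    filter_upwards with x
    rw [norm_eq_abs]
    have h1 := hpt x
    have h2 : |rexp (ℓ x) + a * (rexp (ℓ x) * (-(ℓ x)^2/2 - k * ℓ x))|
        ≤ rexp C * (1 + |a| * (C^2/2 + 2*C)) := by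
      have h3 : rexp (ℓ x) ≤ rexp C := exp_le_exp.mpr (abs_le.mp (hC x)).2
      have h4 : |(-(ℓ x)^2/2 - k * ℓ x)| ≤ C^2/2 + 2*C := by
        have ht := hC x
        calc |(-(ℓ x)^2/2 - k * ℓ x)| ≤ |(-(ℓ x)^2/2)| + |k * ℓ x| := abs_sub _ _
          _ = (ℓ x)^2/2 + k * |ℓ x| := by
              rw [abs_mul, abs_of_nonneg hk0,
                abs_of_nonpos (by nlinarith [sq_nonneg (ℓ x)] : -(ℓ x)^2/2 ≤ 0)]
              ring
          _ ≤ C^2/2 + 2*C := by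
              nlinarith [abs_nonneg (ℓ x), mul_le_mul_of_nonneg_left ht hk0,
                pow_le_pow_left₀ (abs_nonneg (ℓ x)) ht 2, sq_abs (ℓ x)]
      calc |rexp (ℓ x) + a * (rexp (ℓ x) * (-(ℓ x)^2/2 - k * ℓ x))|
          ≤ |rexp (ℓ x)| + |a * (rexp (ℓ x) * (-(ℓ x)^2/2 - k * ℓ x))| := abs_add_le _ _
        _ = rexp (ℓ x) + |a| * (rexp (ℓ x) * |(-(ℓ x)^2/2 - k * ℓ x)|) := by
            rw [abs_of_pos (exp_pos _), abs_mul, abs_mul, abs_of_pos (exp_pos _)]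
        _ ≤ rexp C * (1 + |a| * (C^2/2 + 2*C)) := by
            have := mul_le_mul h3 h4 (abs_nonneg _) (exp_pos C).le
            have h5 : rexp (ℓ x) * |(-(ℓ x)^2/2 - k * ℓ x)| ≤ rexp C * (C^2/2 + 2*C) :=
              mul_le_mul h3 h4 (abs_nonneg _) (exp_pos C).le
            nlinarith [abs_nonneg a, exp_pos (ℓ x), exp_pos C,
              mul_le_mul_of_nonneg_left h5 (abs_nonneg a)]
    calc |(1 + a * ℓ x) ^ ((1 - k*a)/a)|
        ≤ |rexp (ℓ x) + a * (rexp (ℓ x) * (-(ℓ x)^2/2 - k * ℓ x))|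
          + |(1 + a * ℓ x) ^ ((1 - k*a)/a)
              - (rexp (ℓ x) + a * (rexp (ℓ x) * (-(ℓ x)^2/2 - k * ℓ x)))| := by
          have := abs_add_le (rexp (ℓ x) + a * (rexp (ℓ x) * (-(ℓ x)^2/2 - k * ℓ x)))
            ((1 + a * ℓ x) ^ ((1 - k*a)/a)
              - (rexp (ℓ x) + a * (rexp (ℓ x) * (-(ℓ x)^2/2 - k * ℓ x))))
          simpa using this
      _ ≤ rexp C * (1 + |a| * (C^2/2 + 2*C)) + (rexp C * (21*(C+1)^4)) * a^2 := by
          linarith [h1, h2]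
  have hIG : ∫ x, (rexp (ℓ x) + a * (rexp (ℓ x) * (-(ℓ x)^2/2 - k * ℓ x))) ∂μ
      = (∫ x, rexp (ℓ x) ∂μ) + a * ∫ x, rexp (ℓ x) * (-(ℓ x)^2/2 - k * ℓ x) ∂μ := by
    rw [integral_add hintexp (hintg.const_mul a), integral_const_mul]
  rw [← hIG, ← integral_sub hintF hintG]
  calc |∫ x, ((1 + a * ℓ x) ^ ((1 - k*a)/a)
      - (rexp (ℓ x) + a * (rexp (ℓ x) * (-(ℓ x)^2/2 - k * ℓ x)))) ∂μ|
      ≤ (rexp C * (21*(C+1)^4)) * a^2 * (μ Set.univ).toReal := by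
        rw [← norm_eq_abs]
        exact norm_integral_le_of_norm_le_const (ae_of_all _ fun x => by
          rw [norm_eq_abs]; exact hpt x)
    _ = (rexp C * (21*(C+1)^4) * (μ Set.univ).toReal) * a^2 := by ring

open Filter Topology

set_option maxHeartbeats 1000000 in
/-- `lim_{a→0} (1/a)[∫F₀(a,ℓ)dμ · ∫F₂(a,ℓ)dμ − (∫F₁(a,ℓ)dμ)²] = 0`, where
`F_k(a,t) = (1+at)^{(1-ka)/a}`. -/
theorem stmt18 {Ω : Type*} [MeasurableSpace Ω] (μ : Measure Ω) [IsFiniteMeasure μ]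
    (ℓ : Ω → ℝ) (hℓ : Measurable ℓ) (C : ℝ) (hC : ∀ x, |ℓ x| ≤ C) :
    Tendsto (fun a : ℝ => (1 / a) *
        ((∫ x, (1 + a * ℓ x) ^ (1 / a) ∂μ) *
            (∫ x, (1 + a * ℓ x) ^ ((1 - 2 * a) / a) ∂μ)
          - (∫ x, (1 + a * ℓ x) ^ ((1 - a) / a) ∂μ) ^ 2))
      (𝓝[≠] 0) (𝓝 0) := by
  set D : ℝ := max C 0 with hD
  have hC0 : (0:ℝ) ≤ D := le_max_right _ _
  have hCb : ∀ x, |ℓ x| ≤ D := fun x => (hC x).trans (le_max_left _ _)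
  set M : ℝ := rexp D * (21*(D+1)^4) * (μ Set.univ).toReal with hM
  have hM0 : 0 ≤ M := by positivity
  set I : ℝ := ∫ x, rexp (ℓ x) ∂μ with hI
  set J : ℝ → ℝ := fun k => ∫ x, rexp (ℓ x) * (-(ℓ x)^2/2 - k * ℓ x) ∂μ with hJ
  have hintg : ∀ k : ℝ, 0 ≤ k → k ≤ 2 →
      Integrable (fun x => rexp (ℓ x) * (-(ℓ x)^2/2 - k * ℓ x)) μ :=
    fun k h1 h2 => stmt18_integrable_g μ ℓ hℓ D hC0 hCb k h1 h2
  have hJlin : J 0 + J 2 = 2 * J 1 := by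
    have e1 : J 0 + J 2
        = ∫ x, (rexp (ℓ x) * (-(ℓ x)^2/2 - 0 * ℓ x)
            + rexp (ℓ x) * (-(ℓ x)^2/2 - 2 * ℓ x)) ∂μ :=
      (integral_add (hintg 0 le_rfl (by norm_num)) (hintg 2 (by norm_num) le_rfl)).symm
    have e2 : (fun x => rexp (ℓ x) * (-(ℓ x)^2/2 - 0 * ℓ x)
            + rexp (ℓ x) * (-(ℓ x)^2/2 - 2 * ℓ x))
        = fun x => 2 * (rexp (ℓ x) * (-(ℓ x)^2/2 - 1 * ℓ x)) := by
      funext x; ring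
    rw [e1, e2, integral_const_mul]
  set δ : ℝ := 1/(8*(D+1)^3) with hδ
  have hδpos : 0 < δ := by positivity
  set Q : ℝ := |J 0 * J 2 - (J 1)^2| + M * (4*|I| + |J 0| + 2*|J 1| + |J 2| + 2*M) with hQ
  refine squeeze_zero_norm' (a := fun a : ℝ => Q * |a|) ?_ ?_
  · -- eventual bound
    have h1 : ∀ᶠ a in 𝓝[≠] (0:ℝ), |a| < min δ 1 := by
      apply eventually_nhdsWithin_of_eventually_nhds
      have := eventually_abs_sub_lt (0:ℝ) (lt_min hδpos one_pos)
      simpa using this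
    have h2 : ∀ᶠ a in 𝓝[≠] (0:ℝ), a ≠ 0 := by
      have := eventually_mem_nhdsWithin (a := (0:ℝ)) (s := {(0:ℝ)}ᶜ)
      simpa using this
    filter_upwards [h1, h2] with a haδ1 ha
    have ha0 : 0 < |a| := abs_pos.mpr ha
    have had : |a| ≤ δ := (lt_min_iff.mp haδ1).1.le
    have ha1 : |a| ≤ 1 := (lt_min_iff.mp haδ1).2.le
    have ha2 : a^2 ≤ 1 := by nlinarith [sq_abs a]
    have h0 := stmt18_integral μ ℓ hℓ D hC0 hCb 0 le_rfl (by norm_num) a ha had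
    have h1' := stmt18_integral μ ℓ hℓ D hC0 hCb 1 (by norm_num) (by norm_num) a ha had
    have h2' := stmt18_integral μ ℓ hℓ D hC0 hCb 2 (by norm_num) le_rfl a ha had
    rw [show (1 - 0*a)/a = 1/a by ring] at h0
    rw [show (1 - 1*a)/a = (1 - a)/a by ring] at h1'
    set G0 : ℝ := ∫ x, (1 + a * ℓ x) ^ (1/a) ∂μ with hG0
    set G1 : ℝ := ∫ x, (1 + a * ℓ x) ^ ((1 - a)/a) ∂μ with hG1
    set G2 : ℝ := ∫ x, (1 + a * ℓ x) ^ ((1 - 2*a)/a) ∂μ with hG2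
    have e0 : |G0 - (I + a * J 0)| ≤ M * a^2 := by
      have : (M : ℝ) * a^2 = (rexp D * (21*(D+1)^4) * (μ Set.univ).toReal) * a^2 := by rw [hM]
      rw [this]; exact h0
    have e1 : |G1 - (I + a * J 1)| ≤ M * a^2 := by
      have : (M : ℝ) * a^2 = (rexp D * (21*(D+1)^4) * (μ Set.univ).toReal) * a^2 := by rw [hM]
      rw [this]; exact h1'
    have e2 : |G2 - (I + a * J 2)| ≤ M * a^2 := by
      have : (M : ℝ) * a^2 = (rexp D * (21*(D+1)^4) * (μ Set.univ).toReal) * a^2 := by rw [hM]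
      rw [this]; exact h2'
    -- algebraic identity
    set E0 : ℝ := G0 - (I + a * J 0) with hE0
    set E1 : ℝ := G1 - (I + a * J 1) with hE1
    set E2 : ℝ := G2 - (I + a * J 2) with hE2
    have f0 : |E0| ≤ M * a^2 := by rw [hE0]; exact e0
    have f1 : |E1| ≤ M * a^2 := by rw [hE1]; exact e1
    have f2 : |E2| ≤ M * a^2 := by rw [hE2]; exact e2
    have hMa2 : (0:ℝ) ≤ M * a^2 := by positivity
    have hMa2' : M * a^2 ≤ M := by nlinarith
    have hid : G0 * G2 - G1^2
        = a^2 * (J 0 * J 2 - (J 1)^2)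
          + E0 * (I + a * J 2 + E2)
          + E2 * (I + a * J 0)
          - E1 * (2*I + 2*a*J 1 + E1) := by
      rw [hE0, hE1, hE2]
      linear_combination (a * I) * hJlin
    have b1 : |I + a * J 2 + E2| ≤ |I| + |J 2| + M := by
      calc |I + a * J 2 + E2| ≤ |I + a * J 2| + |E2| := abs_add_le _ _
        _ ≤ (|I| + |a * J 2|) + M * a^2 := add_le_add (abs_add_le _ _) f2
        _ ≤ |I| + |J 2| + M := by
            rw [abs_mul]
            nlinarith [abs_nonneg (J 2),
              mul_le_mul_of_nonneg_right ha1 (abs_nonneg (J 2))]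
    have b2 : |I + a * J 0| ≤ |I| + |J 0| := by
      calc |I + a * J 0| ≤ |I| + |a * J 0| := abs_add_le _ _
        _ ≤ |I| + |J 0| := by
            rw [abs_mul]
            nlinarith [abs_nonneg (J 0),
              mul_le_mul_of_nonneg_right ha1 (abs_nonneg (J 0))]
    have b3 : |2*I + 2*a*J 1 + E1| ≤ 2*|I| + 2*|J 1| + M := by
      calc |2*I + 2*a*J 1 + E1| ≤ |2*I + 2*a*J 1| + |E1| := abs_add_le _ _
        _ ≤ (|2*I| + |2*a*J 1|) + M * a^2 := add_le_add (abs_add_le _ _) f1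
        _ ≤ 2*|I| + 2*|J 1| + M := by
            rw [show (2:ℝ)*a*J 1 = 2*(a*J 1) by ring, abs_mul, abs_mul,
              abs_mul, abs_of_nonneg (by norm_num : (0:ℝ) ≤ 2)]
            nlinarith [abs_nonneg (J 1),
              mul_le_mul_of_nonneg_right ha1 (abs_nonneg (J 1))]
    have hX : |G0 * G2 - G1^2| ≤ Q * a^2 := by
      rw [hid]
      have t1 : |a^2 * (J 0 * J 2 - (J 1)^2)| = a^2 * |J 0 * J 2 - (J 1)^2| := by
        rw [abs_mul, abs_of_nonneg (sq_nonneg a)]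
      have t2 : |E0 * (I + a * J 2 + E2)| ≤ (M * a^2) * (|I| + |J 2| + M) := by
        rw [abs_mul]
        exact mul_le_mul f0 b1 (abs_nonneg _) hMa2
      have t3 : |E2 * (I + a * J 0)| ≤ (M * a^2) * (|I| + |J 0|) := by
        rw [abs_mul]
        exact mul_le_mul f2 b2 (abs_nonneg _) hMa2
      have t4 : |E1 * (2*I + 2*a*J 1 + E1)| ≤ (M * a^2) * (2*|I| + 2*|J 1| + M) := by
        rw [abs_mul]
        exact mul_le_mul f1 b3 (abs_nonneg _) hMa2
      have tri : |a^2 * (J 0 * J 2 - (J 1)^2) + E0 * (I + a * J 2 + E2)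
            + E2 * (I + a * J 0) - E1 * (2*I + 2*a*J 1 + E1)|
          ≤ |a^2 * (J 0 * J 2 - (J 1)^2)| + |E0 * (I + a * J 2 + E2)|
            + |E2 * (I + a * J 0)| + |E1 * (2*I + 2*a*J 1 + E1)| := by
        calc |a^2 * (J 0 * J 2 - (J 1)^2) + E0 * (I + a * J 2 + E2)
              + E2 * (I + a * J 0) - E1 * (2*I + 2*a*J 1 + E1)|
            ≤ |a^2 * (J 0 * J 2 - (J 1)^2) + E0 * (I + a * J 2 + E2)
              + E2 * (I + a * J 0)| + |E1 * (2*I + 2*a*J 1 + E1)| := abs_sub _ _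
          _ ≤ (|a^2 * (J 0 * J 2 - (J 1)^2) + E0 * (I + a * J 2 + E2)|
              + |E2 * (I + a * J 0)|) + |E1 * (2*I + 2*a*J 1 + E1)| :=
              add_le_add_left (abs_add_le _ _) _
          _ ≤ ((|a^2 * (J 0 * J 2 - (J 1)^2)| + |E0 * (I + a * J 2 + E2)|)
              + |E2 * (I + a * J 0)|) + |E1 * (2*I + 2*a*J 1 + E1)| :=
              add_le_add_left (add_le_add_left (abs_add_le _ _) _) _
          _ = _ := by ring
      have hsum : |a^2 * (J 0 * J 2 - (J 1)^2)| + |E0 * (I + a * J 2 + E2)|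
            + |E2 * (I + a * J 0)| + |E1 * (2*I + 2*a*J 1 + E1)| ≤ Q * a^2 := by
        rw [t1, hQ]
        linarith [t2, t3, t4]
      linarith [tri, hsum]
    show ‖(1/a) * (G0 * G2 - G1^2)‖ ≤ Q * |a|
    rw [norm_eq_abs, abs_mul, show |1/a| = 1/|a| by rw [abs_div, abs_one],
      one_div_mul_eq_div, div_le_iff₀ ha0]
    have hsq : Q * |a| * |a| = Q * a^2 := by
      rw [mul_assoc, abs_mul_abs_self, ← pow_two]
    rw [hsq]
    exact hX
  · have hc : Continuous (fun a : ℝ => Q * |a|) := continuous_const.mul continuous_abs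
    have h2 : Tendsto (fun a : ℝ => Q * |a|) (𝓝 0) (𝓝 0) := by
      simpa using hc.tendsto 0
    exact h2.mono_left nhdsWithin_le_nhds
end
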